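/- arXiv:2103.12839 — 3 statements merged into one kernel-verified Lean document; each statement's English description precedes it below -/
import Mathlib

section
/- Majorant for negative powers: let f = 1 + Σ_{l≥1} f_l t^l ∈ ℝ[[t]] and f̄ = 1 + Σ_{l≥1} f̄_l t^l ∈ ℝ₊[[t]] with f ⊴ f̄, and let ν < 0. Then f^ν ⊴ (2 − f̄)^ν, i.e. the formal power series f^ν (defined via the recurrence p_k = (1/k) Σ_{j=0}^{k−1} ((k−j)ν − j) f_{k−j} p_j, p_0 = 1) is majored coefficientwise by (2 − f̄)^ν. In particular all coefficients of (2 − f̄)^ν are nonnegative. -/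
/-! For `ν < 0` every weight `(k - j) ν - j` of the recurrence defining `g^ν` is nonpositive, so
against the base series `2 - f̄` each term of the recurrence for `(2 - f̄)^ν` is nonnegative and
dominates the absolute value of the corresponding term for `f^ν`; strong induction on `k` then
propagates `|p_j| ≤ p̄_j`. -/

/-- `p` is the formal power series `g^ν` for a power series `g` with constant term 1,
defined through the recurrence `p_k = (1/k) Σ_{j<k} ((k-j)ν − j) g_{k-j} p_j`, `p_0 = 1`
(equivalent to the formal ODE `p'·g = ν·p·g'`). -/
def IsFPow (g p : ℕ → ℝ) (ν : ℝ) : Prop :=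
  p 0 = 1 ∧ ∀ k : ℕ, 1 ≤ k →
    p k = (1 / (k : ℝ)) *
      ∑ j ∈ Finset.range k, ((((k - j : ℕ) : ℝ)) * ν - (j : ℝ)) * g (k - j) * p j

lemma fpow_weight_nonpos {ν : ℝ} (hν : ν ≤ 0) (k j : ℕ) :
    ((k - j : ℕ) : ℝ) * ν - j ≤ 0 := by
  have := mul_nonpos_of_nonneg_of_nonpos (Nat.cast_nonneg (α := ℝ) (k - j)) hν
  linarith [Nat.cast_nonneg (α := ℝ) j]

lemma abs_mul_mul_le_of_nonpos {c x y X Y : ℝ} (hc : c ≤ 0) (hx : |x| ≤ X) (hy : |y| ≤ Y) :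
    |c * x * y| ≤ c * -X * Y :=
  calc |c * x * y| = -c * (|x| * |y|) := by rw [abs_mul, abs_mul, abs_of_nonpos hc, mul_assoc]
    _ ≤ -c * (X * Y) :=
        mul_le_mul_of_nonneg_left (mul_le_mul hx hy (abs_nonneg _) ((abs_nonneg _).trans hx))
          (neg_nonneg.mpr hc)
    _ = c * -X * Y := by ring

theorem IsFPow.abs_le_of_abs_term_le {g gb p pb : ℕ → ℝ} {ν : ℝ}
    (hp : IsFPow g p ν) (hpb : IsFPow gb pb ν)
    (hterm : ∀ k j, j < k → |p j| ≤ pb j →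
      |(((k - j : ℕ) : ℝ) * ν - j) * g (k - j) * p j| ≤
        (((k - j : ℕ) : ℝ) * ν - j) * gb (k - j) * pb j) :
    ∀ k, |p k| ≤ pb k := by
  intro k
  induction k using Nat.strong_induction_on with
  | _ k ih =>
    rcases Nat.eq_zero_or_pos k with rfl | hk
    · simp [hp.1, hpb.1]
    rw [hp.2 k hk, hpb.2 k hk, abs_mul, abs_of_nonneg (by positivity : (0 : ℝ) ≤ 1 / k)]
    gcongr
    exact (Finset.abs_sum_le_sum_abs _ _).trans <| Finset.sum_le_sum fun j hj =>
      hterm k j (Finset.mem_range.mp hj) (ih j (Finset.mem_range.mp hj))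

theorem majorant_neg_fpow_general (f fb p pb : ℕ → ℝ) (ν : ℝ) (hν : ν < 0)
    (hmaj : ∀ k, |f k| ≤ fb k)
    (hp : IsFPow f p ν)
    (hpb : IsFPow (fun k => if k = 0 then 1 else -fb k) pb ν) :
    ∀ k, |p k| ≤ pb k := by
  refine hp.abs_le_of_abs_term_le hpb fun k j hjk hpj => ?_
  rw [if_neg (Nat.sub_ne_zero_of_lt hjk)]
  exact abs_mul_mul_le_of_nonpos (fpow_weight_nonpos hν.le k j) (hmaj _) hpj

/-- Majorant for negative powers: if `f = 1 + Σ f_l t^l ⊴ fb = 1 + Σ fb_l t^l`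
and `ν < 0`, then `f^ν ⊴ (2 − fb)^ν`. Here `p = f^ν` and `pb = (2 − fb)^ν`, the
latter via its base series with coefficients `1, −fb_1, −fb_2, …`. -/
theorem majorant_neg_fpow (f fb p pb : ℕ → ℝ) (ν : ℝ) (hν : ν < 0)
    (hf0 : f 0 = 1) (hfb0 : fb 0 = 1)
    (hmaj : ∀ k, |f k| ≤ fb k)
    (hp : IsFPow f p ν)
    (hpb : IsFPow (fun k => if k = 0 then 1 else -fb k) pb ν) :
    ∀ k, |p k| ≤ pb k :=
  majorant_neg_fpow_general f fb p pb ν hν hmaj hp hpb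
end

section
/- The fixed-point operator Φ preserves the majorant property (Lemma 3.2): with notation as in the N-body problem, let 𝒜 be the set of power series ρ = 1 + Σ_{k≥1} ρ_k t^k ∈ ℝ₊[[t]] such that q_i − q_j ⊴ ‖q_i⁰ − q_j⁰‖·ρ for all 1 ≤ i < j ≤ N, where (q, v) is the formal power series solution of the N-body equations with regular initial data (q⁰, v⁰). Define Φ(ρ) = 1 + μ(q⁰,v⁰)·t + ν(q⁰)·∫∫ ρ·(2 − ρ²)^{−3/2}. Then Φ maps 𝒜 into 𝒜. -/
/-! Because `ρ` majorizes the normalized differences, the series `‖q_i − q_j‖² / ‖q_i⁰ − q_j⁰‖²`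
has constant term `1` and its higher coefficients are bounded in absolute value by those of
`ρ²`, i.e. by minus those of `2 − ρ²`. The recurrence for the power `−3/2` has nonpositive
weights, so `(2 − ρ²)^{−3/2}` majorizes `(‖q_i − q_j‖² / ‖q_i⁰ − q_j⁰‖²)^{−3/2}`. Hence
`g_i(q) ⊴ K_i(q⁰) ρ (2 − ρ²)^{−3/2}`, and integrating `q_i'' − q_j'' = g_i(q) − g_j(q)` twice,
with `μ` and `ν` chosen as maxima over pairs, gives `q_i − q_j ⊴ ‖q_i⁰ − q_j⁰‖ Φ(ρ)`. -/

open scoped RealInnerProductSpace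
open Finset

noncomputable section

/-- Cauchy product of two scalar power series (coefficientwise). -/
def cauchy (a b : ℕ → ℝ) (k : ℕ) : ℝ := ∑ j ∈ Finset.range (k + 1), a j * b (k - j)

/-- `K_i(q⁰) = Σ_{j≠i} G m_j / ‖q_i⁰ − q_j⁰‖²`. -/
def Kcoef {N : ℕ} (G : ℝ) (m : Fin N → ℝ) (q0 : Fin N → EuclideanSpace ℝ (Fin 3))
    (i : Fin N) : ℝ :=
  ∑ j ∈ Finset.univ.erase i, G * m j / ‖q0 i - q0 j‖ ^ 2

lemma cauchy_comm (a b : ℕ → ℝ) (k : ℕ) : cauchy a b k = cauchy b a k := by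
  simp only [cauchy, ← Nat.sum_antidiagonal_eq_sum_range_succ (fun i j => a i * b j),
    ← Nat.sum_antidiagonal_eq_sum_range_succ (fun i j => b i * a j)]
  rw [← Nat.sum_antidiagonal_swap]
  simp only [Prod.fst_swap, Prod.snd_swap, mul_comm]

lemma cauchy_nonneg {a b : ℕ → ℝ} (ha : ∀ k, 0 ≤ a k) (hb : ∀ k, 0 ≤ b k) (k : ℕ) :
    0 ≤ cauchy a b k :=
  sum_nonneg fun j _ => mul_nonneg (ha j) (hb _)

/-- For `ν ≤ 0` every coefficient of the recurrence defining `g ^ ν` is `≤ 0`, so a series `h`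
with `|g k| ≤ -h k` makes `h ^ ν` a majorant of `g ^ ν`. -/
theorem IsFPow.abs_le {g h p P : ℕ → ℝ} {ν : ℝ} (hν : ν ≤ 0) (hp : IsFPow g p ν)
    (hP : IsFPow h P ν) (hgh : ∀ k, 1 ≤ k → |g k| ≤ -h k) (k : ℕ) : |p k| ≤ P k := by
  induction k using Nat.strong_induction_on with
  | _ k ih =>
    rcases Nat.eq_zero_or_pos k with rfl | hk
    · simp [hp.1, hP.1]
    have hterm : ∀ j ∈ range k, |(((k - j : ℕ) : ℝ) * ν - j) * g (k - j) * p j|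
        ≤ (((k - j : ℕ) : ℝ) * ν - j) * h (k - j) * P j := by
      intro j hj
      have hjk := mem_range.mp hj
      have hc : ((k - j : ℕ) : ℝ) * ν - j ≤ 0 := by
        have := mul_nonpos_of_nonneg_of_nonpos (Nat.cast_nonneg (k - j) : (0 : ℝ) ≤ _) hν
        linarith [(Nat.cast_nonneg j : (0 : ℝ) ≤ j)]
      have hg := hgh (k - j) (by omega)
      calc |(((k - j : ℕ) : ℝ) * ν - j) * g (k - j) * p j|
          = -(((k - j : ℕ) : ℝ) * ν - j) * (|g (k - j)| * |p j|) := by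
            rw [abs_mul, abs_mul, abs_of_nonpos hc]; ring
        _ ≤ -(((k - j : ℕ) : ℝ) * ν - j) * (-h (k - j) * P j) :=
            mul_le_mul_of_nonneg_left
              (mul_le_mul hg (ih j hjk) (abs_nonneg _) ((abs_nonneg _).trans hg))
              (neg_nonneg.mpr hc)
        _ = (((k - j : ℕ) : ℝ) * ν - j) * h (k - j) * P j := by ring
    rw [hp.2 k hk, hP.2 k hk, abs_mul, abs_of_nonneg (by positivity)]
    exact mul_le_mul_of_nonneg_left ((abs_sum_le_sum_abs _ _).trans (sum_le_sum hterm))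
      (by positivity)

theorem IsFPow.nonneg {h P : ℕ → ℝ} {ν : ℝ} (hν : ν ≤ 0) (hP : IsFPow h P ν)
    (hh : ∀ k, 1 ≤ k → h k ≤ 0) (k : ℕ) : 0 ≤ P k :=
  (abs_nonneg _).trans <| hP.abs_le hν hP (fun k hk => (abs_of_nonpos (hh k hk)).le) k

section Majorants

variable {E : Type*}

lemma abs_sum_inner_le_cauchy [NormedAddCommGroup E] [InnerProductSpace ℝ E] {x y : ℕ → E}
    {ρ σ : ℕ → ℝ} {r s : ℝ} (hx : ∀ a, ‖x a‖ ≤ r * ρ a) (hy : ∀ a, ‖y a‖ ≤ s * σ a) (k : ℕ) :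
    |∑ a ∈ range (k + 1), ⟪x a, y (k - a)⟫| ≤ r * s * cauchy ρ σ k := by
  rw [cauchy, mul_sum]
  refine (abs_sum_le_sum_abs _ _).trans (sum_le_sum fun a _ => ?_)
  calc |⟪x a, y (k - a)⟫| ≤ ‖x a‖ * ‖y (k - a)‖ := abs_real_inner_le_norm _ _
    _ ≤ (r * ρ a) * (s * σ (k - a)) :=
        mul_le_mul (hx a) (hy _) (norm_nonneg _) ((norm_nonneg _).trans (hx a))
    _ = r * s * (ρ a * σ (k - a)) := by ring

lemma norm_sum_smul_le_cauchy [SeminormedAddCommGroup E] [NormedSpace ℝ E] {w P ρ : ℕ → ℝ}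
    {x : ℕ → E} {r : ℝ} (hw : ∀ a, |w a| ≤ P a) (hx : ∀ a, ‖x a‖ ≤ r * ρ a) (k : ℕ) :
    ‖∑ a ∈ range (k + 1), w a • x (k - a)‖ ≤ r * cauchy P ρ k := by
  rw [cauchy, mul_sum]
  refine (norm_sum_le _ _).trans (sum_le_sum fun a _ => ?_)
  calc ‖w a • x (k - a)‖ = |w a| * ‖x (k - a)‖ := by rw [norm_smul, Real.norm_eq_abs]
    _ ≤ P a * (r * ρ (k - a)) :=
        mul_le_mul (hw a) (hx _) (norm_nonneg _) ((abs_nonneg _).trans (hw a))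
    _ = r * (P a * ρ (k - a)) := by ring

/-- If `‖d‖ ⊴ r ρ`, then `(‖d‖² / r²) ^ ν` is dominated by `(2 - ρ²) ^ ν` for `ν ≤ 0`. -/
theorem IsFPow.abs_le_of_norm_le [NormedAddCommGroup E] [InnerProductSpace ℝ E]
    {d : ℕ → E} {ρ w P : ℕ → ℝ} {r ν : ℝ} (hr : 0 < r) (hν : ν ≤ 0)
    (hd : ∀ a, ‖d a‖ ≤ r * ρ a)
    (hw : IsFPow (fun k => (∑ a ∈ range (k + 1), ⟪d a, d (k - a)⟫) / r ^ 2) w ν)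
    (hP : IsFPow (fun k => if k = 0 then 1 else -(cauchy ρ ρ k)) P ν) (a : ℕ) :
    |w a| ≤ P a := by
  refine hw.abs_le hν hP (fun k hk => ?_) a
  rw [if_neg (by omega), neg_neg, abs_div, abs_of_pos (pow_pos hr 2), div_le_iff₀ (pow_pos hr 2)]
  linarith [abs_sum_inner_le_cauchy hd hd k]

end Majorants

lemma smul_coeff_add_two {M : Type*} [AddCommGroup M] [Module ℝ M] {q v g : ℕ → M}
    (hq : ∀ k : ℕ, ((k : ℝ) + 1) • q (k + 1) = v k)
    (hv : ∀ k : ℕ, ((k : ℝ) + 1) • v (k + 1) = g k) (k : ℕ) :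
    (((k : ℝ) + 2) * ((k : ℝ) + 1)) • q (k + 2) = g k := by
  rw [mul_comm, ← smul_smul, ← hv k, ← hq (k + 1)]
  push_cast
  ring_nf

lemma forall_ne_of_forall_lt {ι E : Type*} [LinearOrder ι] [SeminormedAddCommGroup E]
    {q : ι → ℕ → E} {ρ : ℕ → ℝ}
    (h : ∀ i j, i < j → ∀ k, ‖q i k - q j k‖ ≤ ‖q i 0 - q j 0‖ * ρ k) :
    ∀ i j, i ≠ j → ∀ k, ‖q i k - q j k‖ ≤ ‖q i 0 - q j 0‖ * ρ k := by
  intro i j hij k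
  rcases hij.lt_or_gt with hlt | hgt
  · exact h i j hlt k
  · rw [norm_sub_rev (q i k), norm_sub_rev (q i 0)]
    exact h j i hgt k

section NBody

variable {N : ℕ} {G : ℝ} {m : Fin N → ℝ}

lemma Kcoef_nonneg (hG : 0 ≤ G) (hm : ∀ j, 0 ≤ m j) (q0 : Fin N → EuclideanSpace ℝ (Fin 3))
    (i : Fin N) : 0 ≤ Kcoef G m q0 i :=
  sum_nonneg fun j _ => by have := hm j; positivity

lemma norm_gser_le {q gser : Fin N → ℕ → EuclideanSpace ℝ (Fin 3)}
    {w : Fin N → Fin N → ℕ → ℝ} {ρ P : ℕ → ℝ} (hG : 0 ≤ G) (hm : ∀ j, 0 ≤ m j)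
    (hsep : ∀ i j : Fin N, i ≠ j → q i 0 ≠ q j 0)
    (hgser : ∀ i k, gser i k =
      ∑ j ∈ Finset.univ.erase i, (G * m j / ‖q i 0 - q j 0‖ ^ 3) •
        (∑ a ∈ Finset.range (k + 1), w i j a • (q j (k - a) - q i (k - a))))
    (hq : ∀ i j, i ≠ j → ∀ k, ‖q i k - q j k‖ ≤ ‖q i 0 - q j 0‖ * ρ k)
    (hw : ∀ i j, i ≠ j → ∀ a, |w i j a| ≤ P a) (i : Fin N) (k : ℕ) :
    ‖gser i k‖ ≤ Kcoef G m (fun l => q l 0) i * cauchy ρ P k := by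
  rw [hgser, Kcoef, sum_mul]
  refine (norm_sum_le _ _).trans (sum_le_sum fun j hj => ?_)
  have hij : i ≠ j := (ne_of_mem_erase hj).symm
  have hr : ‖q i 0 - q j 0‖ ≠ 0 := norm_ne_zero_iff.mpr (sub_ne_zero.mpr (hsep i j hij))
  have hsum := norm_sum_smul_le_cauchy (hw i j hij) (x := fun n => q j n - q i n)
    (fun n => by rw [norm_sub_rev]; exact hq i j hij n) k
  have := hm j
  rw [norm_smul, Real.norm_of_nonneg (by positivity), cauchy_comm]
  calc _ ≤ G * m j / ‖q i 0 - q j 0‖ ^ 3 * (‖q i 0 - q j 0‖ * cauchy P ρ k) :=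
        mul_le_mul_of_nonneg_left hsum (by positivity)
    _ = G * m j / ‖q i 0 - q j 0‖ ^ 2 * cauchy P ρ k := by field_simp

end NBody

lemma norm_sub_le_of_smul_eq {E : Type*} [SeminormedAddCommGroup E] [NormedSpace ℝ E]
    {x y a b : E} {D Ka Kb c r ν : ℝ} (hD : 0 < D) (hx : D • x = a) (hy : D • y = b)
    (ha : ‖a‖ ≤ Ka * c) (hb : ‖b‖ ≤ Kb * c) (hc : 0 ≤ c) (hr : 0 < r)
    (hν : (Ka + Kb) / r ≤ ν) : ‖x - y‖ ≤ r * (ν * c / D) := by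
  have hK : Ka + Kb ≤ r * ν := (div_le_iff₀' hr).mp hν
  have hxy : D * ‖x - y‖ = ‖a - b‖ := by
    rw [← hx, ← hy, ← smul_sub, norm_smul, Real.norm_of_nonneg hD.le]
  rw [mul_div_assoc', le_div_iff₀ hD, mul_comm, hxy]
  calc ‖a - b‖ ≤ ‖a‖ + ‖b‖ := norm_sub_le a b
    _ ≤ (Ka + Kb) * c := by linarith
    _ ≤ r * ν * c := mul_le_mul_of_nonneg_right hK hc
    _ = r * (ν * c) := by ring

theorem Phi_maps_A_to_A_general {N : ℕ} (G : ℝ) (m : Fin N → ℝ)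
    (q v gser : Fin N → ℕ → EuclideanSpace ℝ (Fin 3))
    (w : Fin N → Fin N → ℕ → ℝ) (ρ P φ : ℕ → ℝ) (μ0 ν0 : ℝ)
    (hG : 0 < G) (hm : ∀ j, 0 < m j)
    (hsep : ∀ i j : Fin N, i ≠ j → q i 0 ≠ q j 0)
    -- `w i j = (‖q_i − q_j‖²/‖q_i⁰ − q_j⁰‖²)^{−3/2}` as a formal power series
    (hw : ∀ i j : Fin N, i ≠ j →
      IsFPow (fun k =>
        (∑ a ∈ Finset.range (k + 1),
          ⟪q i a - q j a, q i (k - a) - q j (k - a)⟫) / ‖q i 0 - q j 0‖ ^ 2)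
        (w i j) (-(3 / 2)))
    -- `gser i` is the coefficient series of `g_i(q)`
    (hgser : ∀ i k, gser i k =
      ∑ j ∈ Finset.univ.erase i, (G * m j / ‖q i 0 - q j 0‖ ^ 3) •
        (∑ a ∈ Finset.range (k + 1), w i j a • (q j (k - a) - q i (k - a))))
    -- `(q, v)` is the formal power series solution of the N-body equations
    (hODEq : ∀ i, ∀ k : ℕ, ((k : ℝ) + 1) • q i (k + 1 : ℕ) = v i k)
    (hODEv : ∀ i, ∀ k : ℕ, ((k : ℝ) + 1) • v i (k + 1 : ℕ) = gser i k)
    -- `μ0 = max_{i<j} ‖v_i⁰ − v_j⁰‖/‖q_i⁰ − q_j⁰‖`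
    (hμ0ub : ∀ i j : Fin N, i < j → ‖v i 0 - v j 0‖ / ‖q i 0 - q j 0‖ ≤ μ0)
    (hμ0mem : ∃ i j : Fin N, i < j ∧ μ0 = ‖v i 0 - v j 0‖ / ‖q i 0 - q j 0‖)
    -- `ν0 = max_{i<j} (K_i(q⁰)+K_j(q⁰))/‖q_i⁰ − q_j⁰‖`
    (hν0ub : ∀ i j : Fin N, i < j →
      (Kcoef G m (fun l => q l 0) i + Kcoef G m (fun l => q l 0) j) / ‖q i 0 - q j 0‖ ≤ ν0)
    (hν0mem : ∃ i j : Fin N, i < j ∧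
      ν0 = (Kcoef G m (fun l => q l 0) i + Kcoef G m (fun l => q l 0) j) / ‖q i 0 - q j 0‖)
    -- `ρ ∈ 𝒜`
    (hρpos : ∀ k, 0 ≤ ρ k)
    (hρmaj : ∀ i j : Fin N, i < j → ∀ k, ‖q i k - q j k‖ ≤ ‖q i 0 - q j 0‖ * ρ k)
    -- `P = (2 − ρ²)^{−3/2}` as a formal power series
    (hP : IsFPow (fun k => if k = 0 then 1 else -(cauchy ρ ρ k)) P (-(3 / 2)))
    -- `φ = Φ(ρ)`
    (hφ0 : φ 0 = 1) (hφ1 : φ 1 = μ0)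
    (hφ : ∀ k : ℕ, φ (k + 2 : ℕ) = ν0 * cauchy ρ P k / (((k : ℝ) + 2) * ((k : ℝ) + 1))) :
    (∀ k, 0 ≤ φ k) ∧
      ∀ i j : Fin N, i < j → ∀ k, ‖q i k - q j k‖ ≤ ‖q i 0 - q j 0‖ * φ k := by
  have hr : ∀ i j : Fin N, i ≠ j → 0 < ‖q i 0 - q j 0‖ := fun i j hij =>
    norm_pos_iff.mpr (sub_ne_zero.mpr (hsep i j hij))
  have hq := forall_ne_of_forall_lt hρmaj
  have hPnn : ∀ k, 0 ≤ P k := hP.nonneg (by norm_num) fun k hk => by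
    simpa [if_neg (show k ≠ 0 by omega)] using cauchy_nonneg hρpos hρpos k
  have hwP : ∀ i j, i ≠ j → ∀ a, |w i j a| ≤ P a := fun i j hij =>
    (hw i j hij).abs_le_of_norm_le (d := fun n => q i n - q j n) (hr i j hij) (by norm_num)
      (hq i j hij) hP
  have hc := cauchy_nonneg hρpos hPnn
  have hg := norm_gser_le hG.le (fun j => (hm j).le) hsep hgser hq hwP
  have hμ : 0 ≤ μ0 := by
    obtain ⟨i, j, -, rfl⟩ := hμ0mem
    positivity
  have hν : 0 ≤ ν0 := by
    obtain ⟨i, j, -, rfl⟩ := hν0mem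
    have := Kcoef_nonneg hG.le (fun j => (hm j).le) (fun l => q l 0)
    exact div_nonneg (add_nonneg (this i) (this j)) (norm_nonneg _)
  refine ⟨fun k => ?_, fun i j hij k => ?_⟩
  · rcases k with _ | _ | k
    · simp [hφ0]
    · simpa [hφ1] using hμ
    · rw [hφ k]
      have := hc k
      positivity
  · rcases k with _ | _ | k
    · simp [hφ0]
    · have hq1 : ∀ l, q l 1 = v l 0 := fun l => by simpa using hODEq l 0
      rw [hφ1, hq1, hq1]
      exact (div_le_iff₀' (hr i j hij.ne)).mp (hμ0ub i j hij)
    · rw [hφ k]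
      exact norm_sub_le_of_smul_eq (by positivity) (smul_coeff_add_two (hODEq i) (hODEv i) k)
        (smul_coeff_add_two (hODEq j) (hODEv j) k) (hg i k) (hg j k) (hc k) (hr i j hij.ne)
        (hν0ub i j hij)

/-- The operator `Φ(ρ) = 1 + μ(q⁰,v⁰) t + ν(q⁰) ∫∫ ρ (2 − ρ²)^{−3/2}` maps the set `𝒜`
of majorants of the normalized differences of the N-body solution into itself
(Lemma 3.2): if `ρ ∈ 𝒜` (i.e. `q_i − q_j ⊴ ‖q_i⁰ − q_j⁰‖ ρ` for all `i < j`), then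
`φ = Φ(ρ)` satisfies `q_i − q_j ⊴ ‖q_i⁰ − q_j⁰‖ φ` for all `i < j`. Here `μ0 = μ(q⁰,v⁰)`,
`ν0 = ν(q⁰)` are the maxima over pairs, `P = (2 − ρ²)^{−3/2}`, and the coefficients of
`φ` are `φ_0 = 1`, `φ_1 = μ0`, `φ_{k+2} = ν0 (ρ·P)_k / ((k+2)(k+1))`. -/
theorem Phi_maps_A_to_A {N : ℕ} (G : ℝ) (m : Fin N → ℝ)
    (q v gser : Fin N → ℕ → EuclideanSpace ℝ (Fin 3))
    (w : Fin N → Fin N → ℕ → ℝ) (ρ P φ : ℕ → ℝ) (μ0 ν0 : ℝ)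
    (hG : 0 < G) (hm : ∀ j, 0 < m j)
    (hsep : ∀ i j : Fin N, i ≠ j → q i 0 ≠ q j 0)
    -- `w i j = (‖q_i − q_j‖²/‖q_i⁰ − q_j⁰‖²)^{−3/2}` as a formal power series
    (hw : ∀ i j : Fin N, i ≠ j →
      IsFPow (fun k =>
        (∑ a ∈ Finset.range (k + 1),
          ⟪q i a - q j a, q i (k - a) - q j (k - a)⟫) / ‖q i 0 - q j 0‖ ^ 2)
        (w i j) (-(3 / 2)))
    -- `gser i` is the coefficient series of `g_i(q)`
    (hgser : ∀ i k, gser i k =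
      ∑ j ∈ Finset.univ.erase i, (G * m j / ‖q i 0 - q j 0‖ ^ 3) •
        (∑ a ∈ Finset.range (k + 1), w i j a • (q j (k - a) - q i (k - a))))
    -- `(q, v)` is the formal power series solution of the N-body equations
    (hODEq : ∀ i, ∀ k : ℕ, ((k : ℝ) + 1) • q i (k + 1 : ℕ) = v i k)
    (hODEv : ∀ i, ∀ k : ℕ, ((k : ℝ) + 1) • v i (k + 1 : ℕ) = gser i k)
    -- `μ0 = max_{i<j} ‖v_i⁰ − v_j⁰‖/‖q_i⁰ − q_j⁰‖`
    (hμ0ub : ∀ i j : Fin N, i < j → ‖v i 0 - v j 0‖ / ‖q i 0 - q j 0‖ ≤ μ0)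
    (hμ0mem : ∃ i j : Fin N, i < j ∧ μ0 = ‖v i 0 - v j 0‖ / ‖q i 0 - q j 0‖)
    -- `ν0 = max_{i<j} (K_i(q⁰)+K_j(q⁰))/‖q_i⁰ − q_j⁰‖`
    (hν0ub : ∀ i j : Fin N, i < j →
      (Kcoef G m (fun l => q l 0) i + Kcoef G m (fun l => q l 0) j) / ‖q i 0 - q j 0‖ ≤ ν0)
    (hν0mem : ∃ i j : Fin N, i < j ∧
      ν0 = (Kcoef G m (fun l => q l 0) i + Kcoef G m (fun l => q l 0) j) / ‖q i 0 - q j 0‖)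
    -- `ρ ∈ 𝒜`
    (hρ0 : ρ 0 = 1) (hρpos : ∀ k, 0 ≤ ρ k)
    (hρmaj : ∀ i j : Fin N, i < j → ∀ k, ‖q i k - q j k‖ ≤ ‖q i 0 - q j 0‖ * ρ k)
    -- `P = (2 − ρ²)^{−3/2}` as a formal power series
    (hP : IsFPow (fun k => if k = 0 then 1 else -(cauchy ρ ρ k)) P (-(3 / 2)))
    -- `φ = Φ(ρ)`
    (hφ0 : φ 0 = 1) (hφ1 : φ 1 = μ0)
    (hφ : ∀ k : ℕ, φ (k + 2 : ℕ) = ν0 * cauchy ρ P k / (((k : ℝ) + 2) * ((k : ℝ) + 1))) :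
    (∀ k, 0 ≤ φ k) ∧
      ∀ i j : Fin N, i < j → ∀ k, ‖q i k - q j k‖ ≤ ‖q i 0 - q j 0‖ * φ k :=
  Phi_maps_A_to_A_general G m q v gser w ρ P φ μ0 ν0 hG hm hsep hw hgser hODEq hODEv hμ0ub hμ0mem
    hν0ub hν0mem hρpos hρmaj hP hφ0 hφ1 hφ

end
end

section
/- Algebraic relation between the discrete majorant series (Remark after Theorem 5.2): the fixed-point power series (ξ̂, ζ̂) ∈ (1 + τℝ[[τ]]) × τℝ[[τ]] of the midpoint majorant operator Ψ̂, i.e. the unique solution of ξ̂ = 1 + (τ/2)(2 − χ(ξ̂,ζ̂))^{−1/2}(1 + ζ̂) and ζ̂ = (τ/2)(2 − χ(ξ̂,ζ̂))^{−1/2} ξ̂ (2 − ξ̂²)^{−3/2}, satisfies ζ̂ = (1/2)((1 − 4ξ̂(1 − ξ̂)(2 − ξ̂²)^{−3/2})^{1/2} − 1) as formal power series in τ. -/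
/-! Multiplying the first fixed-point equation by `ξ̂ D` and the second by `1 + ζ̂` eliminates the
common factor `(τ/2)(2 − χ)^{−1/2}` and gives `ζ̂ (1 + ζ̂) = (ξ̂ − 1) ξ̂ D`; completing the square,
`(1 + 2ζ̂)² = 1 − 4 ξ̂ (1 − ξ̂) D`. A series with constant term `1` whose square is `g` satisfies
the `IsFPow` recurrence for `g^{1/2}` (it is the coefficient form of `θp · g = ½ p · θg` with
`θ = X d/dX`), and that recurrence has only one solution, so `S = 1 + 2ζ̂`. -/

noncomputable section

/-- The constant power series `1`. -/
def one' (k : ℕ) : ℝ := if k = 0 then 1 else 0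

open PowerSeries

section Coefficients

variable {R : Type*} [CommSemiring R]

theorem PowerSeries.mk_eq_C_add_X_mul {a : ℕ → R} {f : R⟦X⟧} (h : ∀ k, a (k + 1) = coeff k f) :
    mk a = C (a 0) + X * f := by
  ext (_ | k) <;> simp [coeff_succ_X_mul, h]

theorem PowerSeries.coeff_X_mul_derivative (f : R⟦X⟧) (k : ℕ) :
    coeff k (X * d⁄dX R f) = k * coeff k f := by
  cases k with
  | zero => simp
  | succ k => rw [coeff_succ_X_mul, coeff_derivative]; push_cast; ring

theorem PowerSeries.X_mul_derivative_mk (a : ℕ → R) :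
    X * d⁄dX R (mk a) = mk fun k => k * a k := by
  ext k; rw [coeff_X_mul_derivative, coeff_mk, coeff_mk]

@[simp]
theorem PowerSeries.coeff_ofNat_mul (n : ℕ) [n.AtLeastTwo] (f : R⟦X⟧) (k : ℕ) :
    coeff k ((ofNat(n) : R⟦X⟧) * f) = ofNat(n) * coeff k f := by
  rw [← map_ofNat C n, coeff_C_mul]

end Coefficients

theorem coeff_mk_mul_mk (a b : ℕ → ℝ) (k : ℕ) : coeff k (mk a * mk b) = cauchy a b k := by
  simp [coeff_mul, Finset.Nat.sum_antidiagonal_eq_sum_range_succ_mk, cauchy]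

theorem mk_cauchy (a b : ℕ → ℝ) : mk (cauchy a b) = mk a * mk b := by
  ext k; rw [coeff_mk, coeff_mk_mul_mk]

theorem mk_one' : mk one' = 1 := by
  ext k; simp [one', coeff_one]

theorem IsFPow.unique {g p q : ℕ → ℝ} {ν : ℝ} (hp : IsFPow g p ν) (hq : IsFPow g q ν) : p = q := by
  funext k
  induction k using Nat.strong_induction_on with
  | _ k ih =>
    rcases Nat.eq_zero_or_pos k with rfl | hk
    · rw [hp.1, hq.1]
    · rw [hp.2 k hk, hq.2 k hk]
      congr 1
      exact Finset.sum_congr rfl fun j hj => by rw [ih j (Finset.mem_range.mp hj)]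

theorem isFPow_of_X_mul_derivative {g p : ℕ → ℝ} {ν : ℝ} (hg : g 0 = 1) (hp : p 0 = 1)
    (h : X * d⁄dX ℝ (mk p) * mk g = C ν * (mk p * (X * d⁄dX ℝ (mk g)))) : IsFPow g p ν := by
  refine ⟨hp, fun k hk => ?_⟩
  have hcoeff := congrArg (coeff k) h
  rw [X_mul_derivative_mk, X_mul_derivative_mk, coeff_C_mul, coeff_mk_mul_mk, coeff_mk_mul_mk]
    at hcoeff
  simp only [cauchy, Finset.sum_range_succ, Nat.sub_self, hg, Nat.cast_zero, mul_zero, add_zero,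
    mul_one] at hcoeff
  have hkp : k * p k = ∑ j ∈ Finset.range k, ((k - j : ℕ) * ν - j) * g (k - j) * p j := by
    rw [eq_sub_of_add_eq' hcoeff, Finset.mul_sum, ← Finset.sum_sub_distrib]
    exact Finset.sum_congr rfl fun j _ => by ring
  have hk0 : (k : ℝ) ≠ 0 := by positivity
  rw [← hkp]
  field_simp

theorem isFPow_half_of_sq {g p : ℕ → ℝ} (hp : p 0 = 1) (h : mk p ^ 2 = mk g) :
    IsFPow g p (1 / 2) := by
  have hg : g 0 = 1 := by
    simpa [hp] using (congrArg (coeff 0) h).symm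
  refine isFPow_of_X_mul_derivative hg hp ?_
  have hC : (C (1 / 2 : ℝ) : ℝ⟦X⟧) * 2 = 1 := by
    rw [← map_ofNat C 2, ← map_mul]; norm_num
  rw [← h, pow_two, Derivation.leibniz]
  linear_combination (-(mk p * X * mk p * d⁄dX ℝ (mk p))) * hC

theorem one_add_two_mul_sq_eq {R : Type*} [CommRing R] {t x z d : R} (hx : x = 1 + t * (1 + z))
    (hz : z = t * (x * d)) : (1 + 2 * z) ^ 2 = 1 - 4 * (x * (1 - x) * d) := by
  linear_combination 4 * (1 + z) * hz - 4 * x * d * hx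

theorem sq_mk_eq_of_fixedPoint {ξ ζ c d : ℕ → ℝ} (hξ0 : ξ 0 = 1) (hζ0 : ζ 0 = 0)
    (hξfix : ∀ k, ξ (k + 1) = 1 / 2 * cauchy c (fun l => one' l + ζ l) k)
    (hζfix : ∀ k, ζ (k + 1) = 1 / 2 * cauchy c (cauchy ξ d) k) :
    (mk fun k => one' k + 2 * ζ k) ^ 2 =
      mk fun k => one' k - 4 * cauchy (cauchy ξ fun l => one' l - ξ l) d k := by
  have hξ : mk ξ = 1 + X * C (1 / 2) * mk c * (1 + mk ζ) := by
    rw [mk_eq_C_add_X_mul (f := C (1 / 2) * mk (cauchy c fun l => one' l + ζ l)), hξ0, map_one,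
      mk_cauchy, show (mk fun l => one' l + ζ l) = 1 + mk ζ by ext; simp [← mk_one']]
    · ring
    · intro k; rw [hξfix, coeff_C_mul, coeff_mk]
  have hζ : mk ζ = X * C (1 / 2) * mk c * (mk ξ * mk d) := by
    rw [mk_eq_C_add_X_mul (f := C (1 / 2) * mk (cauchy c (cauchy ξ d))), hζ0, map_zero, mk_cauchy,
      mk_cauchy]
    · ring
    · intro k; rw [hζfix, coeff_C_mul, coeff_mk]
  have hlhs : (mk fun k => one' k + 2 * ζ k) = 1 + 2 * mk ζ := by ext; simp [← mk_one']
  have hrhs : (mk fun k => one' k - 4 * cauchy (cauchy ξ fun l => one' l - ξ l) d k) =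
      1 - 4 * (mk ξ * (1 - mk ξ) * mk d) := by
    rw [show 1 - mk ξ = mk fun l => one' l - ξ l by ext; simp [← mk_one'], ← mk_cauchy, ← mk_cauchy]
    ext; simp [← mk_one']
  rw [hlhs, hrhs]
  exact one_add_two_mul_sq_eq hξ hζ

theorem midpoint_majorant_series_relation_general
    (ξ ζ C D S : ℕ → ℝ)
    (hξ0 : ξ 0 = 1) (hζ0 : ζ 0 = 0)
    -- fixed point equations of Ψ̂ (multiplication by τ shifts coefficients)
    (hξfix : ∀ k : ℕ, ξ (k + 1 : ℕ) =
      (1 / 2) * cauchy C (fun l => one' l + ζ l) k)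
    (hζfix : ∀ k : ℕ, ζ (k + 1 : ℕ) =
      (1 / 2) * cauchy C (cauchy ξ D) k)
    (hS : IsFPow
      (fun k => one' k - 4 * cauchy (cauchy ξ (fun l => one' l - ξ l)) D k) S (1 / 2)) :
    ∀ k, ζ k = (1 / 2) * (S k - one' k) := by
  have hp := isFPow_half_of_sq (by simp [one', hζ0]) (sq_mk_eq_of_fixedPoint hξ0 hζ0 hξfix hζfix)
  intro k
  rw [hS.unique hp]
  ring

/-- Algebraic relation between the discrete majorant series (Remark after Theorem 5.2):
the fixed point `(ξ̂, ζ̂)` of the midpoint majorant operator `Ψ̂`, i.e. the solution of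
`ξ̂ = 1 + (τ/2)(2 − χ(ξ̂,ζ̂))^{−1/2}(1 + ζ̂)` and
`ζ̂ = (τ/2)(2 − χ(ξ̂,ζ̂))^{−1/2} ξ̂ (2 − ξ̂²)^{−3/2}`, where
`χ(ξ,ζ) = (2 − ξ²)^{−1}(2ζ + ζ² + (2 − ξ²)^{−1/2})`, satisfies
`ζ̂ = (1/2)((1 − 4 ξ̂ (1 − ξ̂)(2 − ξ̂²)^{−3/2})^{1/2} − 1)` as formal power series in τ.
Here `A = (2 − ξ̂²)^{−1}`, `B = (2 − ξ̂²)^{−1/2}`, `D = (2 − ξ̂²)^{−3/2}`,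
`C = (2 − χ(ξ̂,ζ̂))^{−1/2}` and `S = (1 − 4 ξ̂ (1 − ξ̂)(2 − ξ̂²)^{−3/2})^{1/2}`,
all given as formal power series via `IsFPow`. -/
theorem midpoint_majorant_series_relation
    (ξ ζ A B C D S : ℕ → ℝ)
    (hξ0 : ξ 0 = 1) (hζ0 : ζ 0 = 0)
    (hA : IsFPow (fun k => if k = 0 then 1 else -(cauchy ξ ξ k)) A (-1))
    (hB : IsFPow (fun k => if k = 0 then 1 else -(cauchy ξ ξ k)) B (-(1 / 2)))
    (hD : IsFPow (fun k => if k = 0 then 1 else -(cauchy ξ ξ k)) D (-(3 / 2)))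
    (hC : IsFPow (fun k => if k = 0 then 1 else
        -(cauchy A (fun l => 2 * ζ l + cauchy ζ ζ l + B l) k)) C (-(1 / 2)))
    -- fixed point equations of Ψ̂ (multiplication by τ shifts coefficients)
    (hξfix : ∀ k : ℕ, ξ (k + 1 : ℕ) =
      (1 / 2) * cauchy C (fun l => one' l + ζ l) k)
    (hζfix : ∀ k : ℕ, ζ (k + 1 : ℕ) =
      (1 / 2) * cauchy C (cauchy ξ D) k)
    (hS : IsFPow
      (fun k => one' k - 4 * cauchy (cauchy ξ (fun l => one' l - ξ l)) D k) S (1 / 2)) :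
    ∀ k, ζ k = (1 / 2) * (S k - one' k) :=
  midpoint_majorant_series_relation_general ξ ζ C D S hξ0 hζ0 hξfix hζfix hS

end
end
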